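/- For any connected graph G of order n ≥ 2, the outer-connected domination number of the middle graph of the corona G ∘ K₁ satisfies n + ⌈n/2⌉ ≤ γ̃_c(M(G ∘ K₁)) ≤ 2n. -/

import Mathlib

open SimpleGraph

/-- `S` is a dominating set of `H`: every vertex is in `S` or adjacent to a vertex of `S`. -/
def IsDomSet {V : Type*} (H : SimpleGraph V) (S : Set V) : Prop :=
  ∀ v : V, ∃ u ∈ S, u = v ∨ H.Adj u v

/-- The connected domination number: minimum size of a dominating set inducing a
connected subgraph. -/
noncomputable def connDomNum {V : Type*} (H : SimpleGraph V) : ℕ :=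
  sInf {k | ∃ S : Set V, IsDomSet H S ∧ (H.induce S).Connected ∧ S.ncard = k}

/-- The outer-connected domination number: minimum size of a dominating set whose
complement induces a connected subgraph. -/
noncomputable def outConnDomNum {V : Type*} (H : SimpleGraph V) : ℕ :=
  sInf {k | ∃ S : Set V, IsDomSet H S ∧ (H.induce Sᶜ).Connected ∧ S.ncard = k}

/-- The middle graph `M(G)`: vertices are `V(G) ∪ E(G)`; a vertex is adjacent to its
incident edges, and two edges are adjacent iff they share a vertex. -/
def middleGraph {V : Type*} (G : SimpleGraph V) : SimpleGraph (V ⊕ G.edgeSet) where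
  Adj x y :=
    match x, y with
    | Sum.inl _, Sum.inl _ => False
    | Sum.inl v, Sum.inr e => v ∈ (e : Sym2 V)
    | Sum.inr e, Sum.inl v => v ∈ (e : Sym2 V)
    | Sum.inr e, Sum.inr f => e ≠ f ∧ ∃ v, v ∈ (e : Sym2 V) ∧ v ∈ (f : Sym2 V)
  symm := by
    constructor
    rintro (v | e) (w | f) h
    · exact h.elim
    · exact h
    · exact h
    · exact ⟨Ne.symm h.1, h.2.imp fun v hv => ⟨hv.2, hv.1⟩⟩
  loopless := by
    constructor
    rintro (v | e) h
    · exact h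
    · exact h.1 rfl

/-- The edge cover number `ρ(G)`: minimum number of edges covering all vertices. -/
noncomputable def edgeCoverNum {V : Type*} (G : SimpleGraph V) : ℕ :=
  sInf {k | ∃ C : Set (Sym2 V), C ⊆ G.edgeSet ∧ (∀ v : V, ∃ e ∈ C, v ∈ e) ∧ C.ncard = k}

/-- The wheel graph with hub `none` and a cycle on `ZMod n` (so `n + 1` vertices). -/
def wheelGraph (n : ℕ) : SimpleGraph (Option (ZMod n)) where
  Adj x y :=
    match x, y with
    | none, none => False
    | none, some _ => True
    | some _, none => True
    | some i, some j => i ≠ j ∧ (i - j = 1 ∨ j - i = 1)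
  symm := by
    constructor
    rintro (_ | i) (_ | j) h
    · exact h.elim
    · trivial
    · trivial
    · exact ⟨h.1.symm, h.2.symm⟩
  loopless := by
    constructor
    rintro (_ | i) h
    · exact h
    · exact h.1 rfl

/-- The friendship graph `F n`: `n` triangles sharing the common vertex `none`. -/
def friendshipGraph (n : ℕ) : SimpleGraph (Option (Fin n × Fin 2)) where
  Adj x y :=
    match x, y with
    | none, none => False
    | none, some _ => True
    | some _, none => True
    | some (i, a), some (j, b) => i = j ∧ a ≠ b
  symm := by
    constructor
    rintro (_ | ⟨i, a⟩) (_ | ⟨j, b⟩) h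
    · exact h.elim
    · trivial
    · trivial
    · exact ⟨h.1.symm, h.2.symm⟩
  loopless := by
    constructor
    rintro (_ | ⟨i, a⟩) h
    · exact h
    · exact h.2 rfl

/-- The corona `G ∘ K₁`: each vertex `Sum.inl v` of `G` gets a pendant vertex `Sum.inr v`. -/
def corona {V : Type*} (G : SimpleGraph V) : SimpleGraph (V ⊕ V) where
  Adj x y :=
    match x, y with
    | Sum.inl v, Sum.inl w => G.Adj v w
    | Sum.inl v, Sum.inr w => v = w
    | Sum.inr v, Sum.inl w => v = w
    | Sum.inr _, Sum.inr _ => False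
  symm := by
    constructor
    rintro (v | v) (w | w) h
    · exact h.symm
    · exact h.symm
    · exact h.symm
    · exact h.elim
  loopless := by
    constructor
    rintro (v | v) h
    · exact (G.ne_of_adj h) rfl
    · exact h

/-- The 2-corona `G ∘ P₂`: each vertex `Sum.inl v` of `G` gets a pendant path
`Sum.inl v — Sum.inr (Sum.inl v) — Sum.inr (Sum.inr v)`. -/
def corona2 {V : Type*} (G : SimpleGraph V) : SimpleGraph (V ⊕ (V ⊕ V)) where
  Adj x y :=
    match x, y with
    | Sum.inl v, Sum.inl w => G.Adj v w
    | Sum.inl v, Sum.inr (Sum.inl w) => v = w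
    | Sum.inr (Sum.inl v), Sum.inl w => v = w
    | Sum.inr (Sum.inl v), Sum.inr (Sum.inr w) => v = w
    | Sum.inr (Sum.inr v), Sum.inr (Sum.inl w) => v = w
    | _, _ => False
  symm := by
    constructor
    rintro (v | v | v) (w | w | w) h
    · exact h.symm
    · exact h.symm
    · exact h.elim
    · exact h.symm
    · exact h.elim
    · exact h.symm
    · exact h.elim
    · exact h.symm
    · exact h.elim
  loopless := by
    constructor
    rintro (v | v | v) h
    · exact (G.ne_of_adj h) rfl
    · exact h
    · exact h

/-- The join `G + K̄ p` of `G` with the empty graph on `p` vertices. -/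
def joinEmpty {V : Type*} (G : SimpleGraph V) (p : ℕ) : SimpleGraph (V ⊕ Fin p) where
  Adj x y :=
    match x, y with
    | Sum.inl v, Sum.inl w => G.Adj v w
    | Sum.inl _, Sum.inr _ => True
    | Sum.inr _, Sum.inl _ => True
    | Sum.inr _, Sum.inr _ => False
  symm := by
    constructor
    rintro (v | v) (w | w) h
    · exact h.symm
    · trivial
    · trivial
    · exact h.elim
  loopless := by
    constructor
    rintro (v | v) h
    · exact (G.ne_of_adj h) rfl
    · exact h

/-! The vertices of `G ∘ K₁` (2n of them) dominate its middle graph, and what remains is the line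
graph of the connected corona, which is connected; this gives the upper bound.

For the lower bound let `S` be a dominating set with connected complement. If a leaf of the corona
lies outside `S`, its only neighbour in the middle graph is its pendant edge, which must then lie in
`S`; so the leaf is isolated in `Sᶜ`, forcing `Sᶜ` to be that leaf alone and `|S| ≥ 3n - 1`.
Otherwise `S` contains all `n` leaves, and the `n` vertices of `G` are dominated by further elements
of `S`, each of which (a vertex or an edge) dominates at most two of them. -/

section MiddleGraph

variable {W : Type*} {H : SimpleGraph W}

lemma outConnDomNum_le {S : Set W} (hS : IsDomSet H S) (hconn : (H.induce Sᶜ).Connected) :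
    outConnDomNum H ≤ S.ncard :=
  Nat.sInf_le ⟨S, hS, hconn, rfl⟩

lemma le_outConnDomNum {k : ℕ} (hex : ∃ S, IsDomSet H S ∧ (H.induce Sᶜ).Connected)
    (h : ∀ S, IsDomSet H S → (H.induce Sᶜ).Connected → k ≤ S.ncard) :
    k ≤ outConnDomNum H := by
  obtain ⟨S, hS, hconn⟩ := hex
  refine le_csInf ⟨S.ncard, S, hS, hconn, rfl⟩ ?_
  rintro _ ⟨T, hT, hTconn, rfl⟩
  exact h T hT hTconn

lemma compl_eq_singleton_of_forall_adj_mem {S : Set W} {x : W}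
    (hconn : (H.induce Sᶜ).Connected) (hx : x ∉ S) (hadj : ∀ y, H.Adj x y → y ∈ S) :
    Sᶜ = {x} := by
  refine Set.eq_singleton_iff_unique_mem.2 ⟨hx, fun y hy => ?_⟩
  by_contra hne
  have : Nontrivial (Sᶜ : Set W) := ⟨⟨x, hx⟩, ⟨y, hy⟩, fun h => hne (congrArg Subtype.val h).symm⟩
  obtain ⟨z, hz⟩ := hconn.preconnected.exists_adj_of_nontrivial ⟨x, hx⟩
  exact z.2 (hadj z hz)

namespace SimpleGraph

lemma lineGraph_reachable_of_mem {e f : H.edgeSet} {v : W} (he : v ∈ (e : Sym2 W))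
    (hf : v ∈ (f : Sym2 W)) : H.lineGraph.Reachable e f := by
  obtain rfl | hne := eq_or_ne e f
  · rfl
  · exact Adj.reachable (lineGraph_adj_iff_exists.2 ⟨hne, v, he, hf⟩)

lemma lineGraph_reachable_of_walk {a b : W} (p : H.Walk a b) {e f : H.edgeSet}
    (he : a ∈ (e : Sym2 W)) (hf : b ∈ (f : Sym2 W)) : H.lineGraph.Reachable e f := by
  induction p generalizing e with
  | nil => exact lineGraph_reachable_of_mem he hf
  | @cons a c _ hac _ ih =>
    exact (lineGraph_reachable_of_mem (f := ⟨s(a, c), hac⟩) he (Sym2.mem_mk_left a c)).trans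
      (ih (Sym2.mem_mk_right a c) hf)

lemma lineGraph_connected (hH : H.Connected) (he : H.edgeSet.Nonempty) :
    H.lineGraph.Connected := by
  have : Nonempty H.edgeSet := he.to_subtype
  exact (connected_iff _).2 ⟨fun e f => lineGraph_reachable_of_walk
    (hH.preconnected _ _).some (Sym2.out_fst_mem _) (Sym2.out_fst_mem _), inferInstance⟩

end SimpleGraph

lemma middleGraph_adj_inl_iff {u : W ⊕ H.edgeSet} {x : W} :
    (middleGraph H).Adj u (Sum.inl x) ↔ ∃ e : H.edgeSet, u = Sum.inr e ∧ x ∈ (e : Sym2 W) := by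
  rcases u with y | e <;> simp [middleGraph]

lemma isDomSet_middleGraph_range_inl : IsDomSet (middleGraph H) (Set.range Sum.inl) := by
  rintro (x | e)
  · exact ⟨Sum.inl x, ⟨x, rfl⟩, Or.inl rfl⟩
  · exact ⟨Sum.inl (e : Sym2 W).out.1, ⟨_, rfl⟩, Or.inr (Sym2.out_fst_mem _)⟩

variable (H) in
def lineGraphHomMiddleGraph :
    H.lineGraph →g (middleGraph H).induce (Set.range Sum.inl)ᶜ where
  toFun e := ⟨Sum.inr e, fun ⟨_, h⟩ => Sum.inl_ne_inr h⟩
  map_rel' h := lineGraph_adj_iff_exists.1 h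

lemma middleGraph_induce_compl_range_inl_connected (hH : H.Connected)
    (he : H.edgeSet.Nonempty) :
    ((middleGraph H).induce (Set.range Sum.inl)ᶜ).Connected := by
  refine (lineGraph_connected hH he).map (lineGraphHomMiddleGraph H) ?_
  rintro ⟨x | e, hx⟩
  · exact absurd ⟨x, rfl⟩ hx
  · exact ⟨e, rfl⟩

lemma ncard_middleGraph_dominated_le_two (u : W ⊕ H.edgeSet) :
    {x | u = Sum.inl x ∨ (middleGraph H).Adj u (Sum.inl x)}.ncard ≤ 2 := by
  rcases u with z | ⟨e, he⟩
  · refine (Set.ncard_le_ncard (t := {z}) fun x hx => ?_).trans (by simp)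
    simpa [middleGraph, eq_comm] using hx
  · induction e using Sym2.ind with
    | _ a b =>
      refine (Set.ncard_le_ncard (t := {a, b}) fun x hx => ?_).trans
        ((Set.ncard_insert_le _ _).trans (by simp))
      simpa [middleGraph] using hx

lemma ncard_le_two_mul_ncard_of_dominates [Finite W] {A : Set W} {T : Set (W ⊕ H.edgeSet)}
    (hA : ∀ x ∈ A, ∃ u ∈ T, u = Sum.inl x ∨ (middleGraph H).Adj u (Sum.inl x)) :
    A.ncard ≤ 2 * T.ncard := by
  have hT := T.toFinite
  calc A.ncard
      ≤ (⋃ u ∈ T, {x | u = Sum.inl x ∨ (middleGraph H).Adj u (Sum.inl x)}).ncard :=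
        Set.ncard_le_ncard fun x hx => by simpa using hA x hx
    _ ≤ ∑ᶠ u ∈ T, {x | u = Sum.inl x ∨ (middleGraph H).Adj u (Sum.inl x)}.ncard :=
        hT.ncard_biUnion_le _
    _ ≤ 2 * T.ncard := by
        rw [finsum_mem_eq_finite_toFinset_sum _ hT, Set.ncard_eq_toFinset_card T hT, mul_comm]
        exact Finset.sum_le_card_nsmul _ _ _ fun u _ => ncard_middleGraph_dominated_le_two u

end MiddleGraph

section Corona

variable {V : Type*} {G : SimpleGraph V}

variable (G) in
def pendantEdge (v : V) : (corona G).edgeSet := ⟨s(Sum.inl v, Sum.inr v), rfl⟩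

lemma pendantEdge_injective : Function.Injective (pendantEdge G) := fun v w h => by
  simpa [pendantEdge] using congrArg Subtype.val h

lemma eq_pendantEdge_of_inr_mem {e : (corona G).edgeSet} {v : V}
    (h : Sum.inr v ∈ (e : Sym2 (V ⊕ V))) : e = pendantEdge G v := by
  obtain ⟨e, he⟩ := e
  induction e using Sym2.ind with
  | _ a b =>
    have hab : (corona G).Adj a b := he
    rcases a with a | a <;> rcases b with b | b <;>
      simp_all [corona, pendantEdge, Sym2.eq_swap]

variable (G) in
def coronaInlHom : G →g corona G where
  toFun := Sum.inl
  map_rel' h := h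

lemma corona_connected (hc : G.Connected) : (corona G).Connected := by
  obtain ⟨v⟩ := hc.nonempty
  have hinl (w : V) : (corona G).Reachable (Sum.inl v) (Sum.inl w) :=
    (hc.preconnected v w).map (coronaInlHom G)
  refine (connected_iff_exists_forall_reachable _).2 ⟨Sum.inl v, ?_⟩
  rintro (w | w)
  · exact hinl w
  · exact (hinl w).trans (Adj.reachable (show (corona G).Adj (Sum.inl w) (Sum.inr w) from rfl))

lemma eq_pendantEdge_of_middleGraph_corona_adj {u : (V ⊕ V) ⊕ (corona G).edgeSet} {v : V}
    (h : (middleGraph (corona G)).Adj (Sum.inl (Sum.inr v)) u) :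
    u = Sum.inr (pendantEdge G v) := by
  obtain ⟨e, rfl, hv⟩ := middleGraph_adj_inl_iff.1 h.symm
  rw [eq_pendantEdge_of_inr_mem hv]

end Corona

section CoronaLowerBound

variable {V : Type*} [Fintype V] {G : SimpleGraph V} {S : Set ((V ⊕ V) ⊕ (corona G).edgeSet)}

lemma three_mul_card_le_card_middleGraph_corona :
    3 * Fintype.card V ≤ Nat.card ((V ⊕ V) ⊕ (corona G).edgeSet) := by
  have := Nat.card_le_card_of_injective _ (pendantEdge_injective (G := G))
  rw [Nat.card_sum, Nat.card_sum, ← Nat.card_eq_fintype_card]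
  omega

lemma ncard_add_one_eq_of_leaf_not_mem (hS : IsDomSet (middleGraph (corona G)) S)
    (hconn : ((middleGraph (corona G)).induce Sᶜ).Connected) {v : V}
    (hv : Sum.inl (Sum.inr v) ∉ S) :
    S.ncard + 1 = Nat.card ((V ⊕ V) ⊕ (corona G).edgeSet) := by
  have hpendant : Sum.inr (pendantEdge G v) ∈ S := by
    obtain ⟨u, huS, rfl | hu⟩ := hS (Sum.inl (Sum.inr v))
    · exact absurd huS hv
    · rwa [← eq_pendantEdge_of_middleGraph_corona_adj hu.symm]
  have hcompl : Sᶜ = {Sum.inl (Sum.inr v)} := compl_eq_singleton_of_forall_adj_mem hconn hv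
    fun u hu => eq_pendantEdge_of_middleGraph_corona_adj hu ▸ hpendant
  rw [← Set.ncard_add_ncard_compl S, hcompl, Set.ncard_singleton]

lemma le_ncard_of_range_inl_inr_subset (hS : IsDomSet (middleGraph (corona G)) S)
    (hleaves : Set.range (Sum.inl ∘ Sum.inr) ⊆ S) :
    Fintype.card V + (Fintype.card V + 1) / 2 ≤ S.ncard := by
  have hcount : (Set.range (Sum.inl : V → V ⊕ V)).ncard ≤
      2 * (S \ Set.range (Sum.inl ∘ Sum.inr)).ncard := by
    refine ncard_le_two_mul_ncard_of_dominates ?_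
    rintro _ ⟨v, rfl⟩
    obtain ⟨u, huS, hu⟩ := hS (Sum.inl (Sum.inl v))
    refine ⟨u, ⟨huS, ?_⟩, hu⟩
    rintro ⟨w, rfl⟩
    simp [middleGraph] at hu
  have hsplit := Set.ncard_sdiff_add_ncard_of_subset hleaves
  rw [Set.ncard_range_of_injective Sum.inl_injective, Nat.card_eq_fintype_card] at hcount
  rw [Set.ncard_range_of_injective (Sum.inl_injective.comp Sum.inr_injective),
    Nat.card_eq_fintype_card] at hsplit
  omega

lemma le_ncard_of_isDomSet_middleGraph_corona (hS : IsDomSet (middleGraph (corona G)) S)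
    (hconn : ((middleGraph (corona G)).induce Sᶜ).Connected) :
    Fintype.card V + (Fintype.card V + 1) / 2 ≤ S.ncard := by
  by_cases hleaves : Set.range (Sum.inl ∘ Sum.inr) ⊆ S
  · exact le_ncard_of_range_inl_inr_subset hS hleaves
  · obtain ⟨_, ⟨v, rfl⟩, hv⟩ := Set.not_subset.1 hleaves
    have hcard := ncard_add_one_eq_of_leaf_not_mem hS hconn hv
    have h3 := three_mul_card_le_card_middleGraph_corona (G := G)
    omega

end CoronaLowerBound

theorem stmt11_general {V : Type*} [Fintype V] (G : SimpleGraph V) (n : ℕ)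
    (hn : Fintype.card V = n) (hc : G.Connected) :
    n + (n + 1) / 2 ≤ outConnDomNum (middleGraph (corona G)) ∧
      outConnDomNum (middleGraph (corona G)) ≤ 2 * n := by
  subst hn
  have hdom := isDomSet_middleGraph_range_inl (H := corona G)
  have hconn := middleGraph_induce_compl_range_inl_connected (corona_connected hc)
    ⟨_, (pendantEdge G hc.nonempty.some).2⟩
  refine ⟨le_outConnDomNum ⟨_, hdom, hconn⟩
    fun S hS hSconn => le_ncard_of_isDomSet_middleGraph_corona hS hSconn, ?_⟩
  calc outConnDomNum (middleGraph (corona G))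
      ≤ (Set.range Sum.inl).ncard := outConnDomNum_le hdom hconn
    _ = 2 * Fintype.card V := by
      rw [Set.ncard_range_of_injective Sum.inl_injective, Nat.card_eq_fintype_card,
        Fintype.card_sum, two_mul]

theorem stmt11 {V : Type*} [Fintype V] (G : SimpleGraph V) (n : ℕ)
    (hn : Fintype.card V = n) (h2 : 2 ≤ n) (hc : G.Connected) :
    n + (n + 1) / 2 ≤ outConnDomNum (middleGraph (corona G)) ∧
      outConnDomNum (middleGraph (corona G)) ≤ 2 * n :=
  stmt11_general G n hn hc
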